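/- Let H be a finite simple graph with α(H) < Θ(H), let ℓ ≥ 2 be even, and let G be the graph obtained from the disjoint union of H and the path P_ℓ by adding one edge between a fixed vertex of H and an endpoint of P_ℓ. Then Θ(G) = Θ(H + P_ℓ), α(G^k) = α((H+P_ℓ)^k) for every k ∈ ℕ, and Θ(G)^k > α(G^k) for every k ∈ ℕ; i.e., the Shannon capacity of the connected graph G is unattained at every finite strong power. -/

import Mathlib

namespace Paper

def strongProd {V W : Type*} (G : SimpleGraph V) (H : SimpleGraph W) : SimpleGraph (V × W) :=
  SimpleGraph.fromRel (fun x y =>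
    (x.1 = y.1 ∨ G.Adj x.1 y.1) ∧ (x.2 = y.2 ∨ H.Adj x.2 y.2))

def strongPow {V : Type*} (G : SimpleGraph V) (k : ℕ) : SimpleGraph (Fin k → V) :=
  SimpleGraph.fromRel (fun x y => ∀ i, x i = y i ∨ G.Adj (x i) (y i))

noncomputable def indepNum {V : Type*} [Fintype V] (G : SimpleGraph V) : ℕ :=
  sSup {n | ∃ s : Finset V, (∀ a ∈ s, ∀ b ∈ s, a ≠ b → ¬ G.Adj a b) ∧ s.card = n}

noncomputable def shannonCapacity {V : Type*} [Fintype V] (G : SimpleGraph V) : ℝ :=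
  ⨆ k : ℕ, (indepNum (strongPow G (k + 1)) : ℝ) ^ ((1 : ℝ) / (k + 1))

noncomputable def lovaszTheta {V : Type*} [Fintype V] (G : SimpleGraph V) : ℝ :=
  sSup {x : ℝ | ∃ B : Matrix V V ℝ, B.PosSemidef ∧ B.trace = 1 ∧
    (∀ i j, G.Adj i j → B i j = 0) ∧ x = ∑ i, ∑ j, B i j}

noncomputable def fracIndepNum {V : Type*} [Fintype V] (G : SimpleGraph V) : ℝ :=
  sSup {x : ℝ | ∃ f : V → ℝ, (∀ v, 0 ≤ f v) ∧
    (∀ s : Finset V, G.IsClique (s : Set V) → ∑ v ∈ s, f v ≤ 1) ∧ x = ∑ v, f v}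

def Universal {V : Type*} [Fintype V] (G : SimpleGraph V) : Prop :=
  ∀ (W : Type) [Fintype W] (H : SimpleGraph W),
    indepNum (strongProd G H) = indepNum G * indepNum H

def sigmaUnion {ι : Type*} {V : ι → Type*} (G : ∀ i, SimpleGraph (V i)) :
    SimpleGraph (Σ i, V i) :=
  SimpleGraph.fromRel (fun x y =>
    ∃ i, ∃ a b : V i, (G i).Adj a b ∧ x = ⟨i, a⟩ ∧ y = ⟨i, b⟩)

def piStrongProd {ι : Type*} {V : ι → Type*} (G : ∀ i, SimpleGraph (V i)) :
    SimpleGraph (∀ i, V i) :=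
  SimpleGraph.fromRel (fun x y => ∀ i, x i = y i ∨ (G i).Adj (x i) (y i))

def tadpole (k l : ℕ) : SimpleGraph (Fin (k + l)) :=
  SimpleGraph.fromRel (fun x y =>
    ((x : ℕ) < k ∧ (y : ℕ) < k ∧ ((x : ℕ) + 1) % k = (y : ℕ)) ∨
    (k ≤ (x : ℕ) ∧ (y : ℕ) = (x : ℕ) + 1) ∨
    ((x : ℕ) = 0 ∧ (y : ℕ) = k))

/-- The graph obtained from `H` by attaching a path on `l` vertices via an extra
edge between the vertex `v` of `H` and an endpoint (vertex `0`) of the path. -/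
def attachPath {V : Type*} (H : SimpleGraph V) (v : V) (l : ℕ) : SimpleGraph (V ⊕ Fin l) :=
  SimpleGraph.fromRel (fun x y =>
    (∃ a b, H.Adj a b ∧ x = Sum.inl a ∧ y = Sum.inl b) ∨
    (∃ i j : Fin l, (SimpleGraph.pathGraph l).Adj i j ∧ x = Sum.inr i ∧ y = Sum.inr j) ∨
    (∃ j : Fin l, (j : ℕ) = 0 ∧ x = Sum.inl v ∧ y = Sum.inr j))

/-!
Let `p = l / 2` and let `E_p` be the edgeless graph on `p` vertices. For every `n`,
`α(G^n) ≤ α((H + P_l)^n) ≤ α((H + E_p)^n) ≤ α(G^n)`, and each inequality comes from a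
homomorphism between complements, which a strong power preserves: the identity, because
`H + P_l` is a spanning subgraph of `G`; the map contracting each edge `{2c, 2c+1}` of the path;
and the inclusion of `H` together with the odd path vertices, which induce `H + E_p` in `G`
because the neighbour of `v` on the path is the even vertex `0`.

Sorting the coordinates of a vertex of `(H + E_p)^n` by whether and where they lie in `E_p`
splits that graph into disjoint copies of powers of `H`, so `α((H + E_p)^n)` is the sum over
patterns `t : Fin n → Option (Fin p)` of `a (#t⁻¹(none))`, where `a j = α(H^j)`. Since `a` is
supermultiplicative and `α(H) < Θ(H)` gives `a 1 ^ M < a M` for some `M`, this yields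
`α(G^k)^M < α(G^(M k)) ≤ Θ(G)^(M k)`, hence `α(G^k) < Θ(G)^k`.
-/

open SimpleGraph Finset

theorem _root_.SimpleGraph.Hom.cliqueNum_le {α β : Type*} [Finite β] {G : SimpleGraph α}
    {G' : SimpleGraph β} (f : G →g G') : G.cliqueNum ≤ G'.cliqueNum := by
  classical
  obtain ⟨s, hs⟩ := G.exists_isNClique_cliqueNum
  have hinj : Set.InjOn f s := fun x hx y hy hxy =>
    by_contra fun hne => (f.map_adj (hs.isClique hx hy hne)).ne hxy
  rw [← hs.card_eq, ← card_image_of_injOn hinj]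
  refine IsClique.card_le_cliqueNum (tc := ?_)
  rintro _ ha _ hb hne
  obtain ⟨x, hx, rfl⟩ := mem_image.mp ha
  obtain ⟨y, hy, rfl⟩ := mem_image.mp hb
  exact f.map_adj (hs.isClique hx hy (ne_of_apply_ne f hne))

section IndepNum

variable {U U' : Type*} [Fintype U] [Fintype U'] {G : SimpleGraph U} {G' : SimpleGraph U'}

theorem indepNum_eq_simpleGraph_indepNum (G : SimpleGraph U) : indepNum G = G.indepNum := by
  simp only [indepNum, SimpleGraph.indepNum, isNIndepSet_iff, IsIndepSet, Set.Pairwise,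
    mem_coe]

theorem card_le_indepNum {s : Finset U} (hs : G.IsIndepSet s) : #s ≤ indepNum G :=
  indepNum_eq_simpleGraph_indepNum G ▸ hs.card_le_indepNum

theorem exists_isNIndepSet_indepNum (G : SimpleGraph U) : ∃ s, G.IsNIndepSet (indepNum G) s :=
  indepNum_eq_simpleGraph_indepNum G ▸ G.exists_isNIndepSet_indepNum

theorem indepNum_le_of_hom_compl (f : Gᶜ →g G'ᶜ) : indepNum G ≤ indepNum G' := by
  simpa only [indepNum_eq_simpleGraph_indepNum, cliqueNum_compl] using f.cliqueNum_le

theorem indepNum_le_of_surjective (f : G →g G') (hf : Function.Surjective f) :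
    indepNum G' ≤ indepNum G :=
  indepNum_le_of_hom_compl ⟨Function.surjInv hf, fun {a b} h => by
    rw [compl_adj] at h ⊢
    refine ⟨fun he => h.1 ?_, fun hadj => h.2 ?_⟩
    · simpa only [Function.surjInv_eq hf] using congrArg f he
    · simpa only [Function.surjInv_eq hf] using f.map_adj hadj⟩

theorem indepNum_le_card (G : SimpleGraph U) : indepNum G ≤ Fintype.card U := by
  obtain ⟨s, hs⟩ := exists_isNIndepSet_indepNum G
  exact hs.card_eq ▸ s.card_le_univ

theorem one_le_indepNum [Nonempty U] (G : SimpleGraph U) : 1 ≤ indepNum G := by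
  simpa using card_le_indepNum (G := G) (s := {Classical.arbitrary U}) (by simp)

end IndepNum

section StrongProduct

variable {ι κ U U' : Type*}

theorem compl_piStrongProd_adj {W : ι → Type*} {G : ∀ i, SimpleGraph (W i)}
    {x y : ∀ i, W i} :
    (piStrongProd G)ᶜ.Adj x y ↔ ∃ i, (G i)ᶜ.Adj (x i) (y i) := by
  simp only [compl_adj, piStrongProd, fromRel_adj]
  constructor
  · rintro ⟨hne, h⟩
    by_contra! hcon
    exact h ⟨hne, Or.inl fun i => or_iff_not_imp_left.2 (hcon i)⟩
  · rintro ⟨i, hne, hna⟩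
    refine ⟨fun h => hne (h ▸ rfl), ?_⟩
    rintro ⟨-, h | h⟩
    · exact (h i).elim hne hna
    · exact (h i).elim (hne ∘ Eq.symm) (hna ∘ (G i).adj_symm)

theorem piStrongProd_adj {W : ι → Type*} {G : ∀ i, SimpleGraph (W i)} {x y : ∀ i, W i} :
    (piStrongProd G).Adj x y ↔ x ≠ y ∧ ∀ i, x i = y i ∨ (G i).Adj (x i) (y i) := by
  simp only [piStrongProd, fromRel_adj, and_congr_right_iff]
  refine fun _ => ⟨fun h => h.elim id fun h i => ?_, Or.inl⟩
  exact (h i).imp Eq.symm (G i).adj_symm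

theorem compl_strongProd_adj {X : SimpleGraph U} {Y : SimpleGraph U'} {p q : U × U'} :
    (strongProd X Y)ᶜ.Adj p q ↔ Xᶜ.Adj p.1 q.1 ∨ Yᶜ.Adj p.2 q.2 := by
  simp only [compl_adj, strongProd, fromRel_adj]
  constructor
  · rintro ⟨hne, h⟩
    by_contra! hcon
    exact h ⟨hne, Or.inl ⟨or_iff_not_imp_left.2 hcon.1, or_iff_not_imp_left.2 hcon.2⟩⟩
  · rintro (⟨hne, hna⟩ | ⟨hne, hna⟩) <;> refine ⟨fun h => hne (h ▸ rfl), ?_⟩ <;>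
      rintro ⟨-, h | h⟩
    · exact h.1.elim hne hna
    · exact h.1.elim (hne ∘ Eq.symm) (hna ∘ X.adj_symm)
    · exact h.2.elim hne hna
    · exact h.2.elim (hne ∘ Eq.symm) (hna ∘ Y.adj_symm)

variable [Fintype ι] [DecidableEq ι] [Fintype κ] [DecidableEq κ] [Fintype U] [Fintype U']

theorem indepNum_strongPow_le_of_hom_compl {G : SimpleGraph U} {G' : SimpleGraph U'}
    (f : Gᶜ →g G'ᶜ) (n : ℕ) : indepNum (strongPow G n) ≤ indepNum (strongPow G' n) :=
  indepNum_le_of_hom_compl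
    { toFun := fun x i => f (x i)
      map_rel' := fun h => by
        obtain ⟨i, hi⟩ := compl_piStrongProd_adj.1 h
        exact compl_piStrongProd_adj.2 ⟨i, f.map_adj hi⟩ }

theorem indepNum_piStrongProd_le_of_surjective (G : SimpleGraph U) {g : κ → ι}
    (hg : g.Surjective) :
    indepNum (piStrongProd fun _ : ι => G) ≤ indepNum (piStrongProd fun _ : κ => G) :=
  indepNum_le_of_hom_compl
    { toFun := fun x => x ∘ g
      map_rel' := fun h => by
        obtain ⟨i, hi⟩ := compl_piStrongProd_adj.1 h
        obtain ⟨j, rfl⟩ := hg i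
        exact compl_piStrongProd_adj.2 ⟨j, hi⟩ }

theorem indepNum_piStrongProd_eq_strongPow (G : SimpleGraph U) :
    indepNum (piStrongProd fun _ : ι => G) = indepNum (strongPow G (Fintype.card ι)) :=
  le_antisymm (indepNum_piStrongProd_le_of_surjective G (Fintype.equivFin ι).symm.surjective)
    (indepNum_piStrongProd_le_of_surjective G (Fintype.equivFin ι).surjective)

theorem indepNum_strongPow_one (G : SimpleGraph U) : indepNum (strongPow G 1) = indepNum G := by
  apply le_antisymm
  · refine indepNum_le_of_hom_compl ⟨fun x => x 0, fun h => ?_⟩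
    obtain ⟨i, hi⟩ := compl_piStrongProd_adj.1 h
    rwa [Subsingleton.elim i 0] at hi
  · exact indepNum_le_of_hom_compl ⟨fun v _ => v, fun h => compl_piStrongProd_adj.2 ⟨0, h⟩⟩

theorem indepNum_mul_le_indepNum_strongProd (X : SimpleGraph U) (Y : SimpleGraph U') :
    indepNum X * indepNum Y ≤ indepNum (strongProd X Y) := by
  obtain ⟨s, hs⟩ := exists_isNIndepSet_indepNum X
  obtain ⟨t, ht⟩ := exists_isNIndepSet_indepNum Y
  rw [← hs.card_eq, ← ht.card_eq, ← card_product]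
  refine card_le_indepNum ((isClique_compl _).1 fun p hp q hq hne => compl_strongProd_adj.2 ?_)
  rw [coe_product] at hp hq
  by_cases h1 : p.1 = q.1
  · exact Or.inr ((isClique_compl _).2 ht.isIndepSet hp.2 hq.2 fun h2 => hne (Prod.ext h1 h2))
  · exact Or.inl ((isClique_compl _).2 hs.isIndepSet hp.1 hq.1 h1)

theorem indepNum_strongPow_mul_le_add (G : SimpleGraph U) (i j : ℕ) :
    indepNum (strongPow G i) * indepNum (strongPow G j) ≤ indepNum (strongPow G (i + j)) :=
  calc indepNum (strongPow G i) * indepNum (strongPow G j)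
      ≤ indepNum (strongProd (strongPow G i) (strongPow G j)) :=
        indepNum_mul_le_indepNum_strongProd _ _
    _ ≤ indepNum (piStrongProd fun _ : Fin i ⊕ Fin j => G) :=
        indepNum_le_of_hom_compl ⟨fun p => Sum.elim p.1 p.2, fun h => by
          rcases compl_strongProd_adj.1 h with h | h <;>
            obtain ⟨k, hk⟩ := compl_piStrongProd_adj.1 h
          · exact compl_piStrongProd_adj.2 ⟨.inl k, hk⟩
          · exact compl_piStrongProd_adj.2 ⟨.inr k, hk⟩⟩
    _ = indepNum (strongPow G (i + j)) := by
        rw [indepNum_piStrongProd_eq_strongPow, Fintype.card_sum, Fintype.card_fin,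
          Fintype.card_fin]

end StrongProduct

section SigmaUnion

variable {ι : Type*} {W : ι → Type*} {G : ∀ i, SimpleGraph (W i)}

theorem sigmaUnion_adj_mk {i : ι} {a b : W i} :
    (sigmaUnion G).Adj ⟨i, a⟩ ⟨i, b⟩ ↔ (G i).Adj a b := by
  simp only [sigmaUnion, fromRel_adj, ne_eq, Sigma.mk.inj_iff, heq_eq_eq, true_and]
  constructor
  · rintro ⟨-, ⟨j, a', b', h, ⟨rfl, ha⟩, -, hb⟩ |
      ⟨j, a', b', h, ⟨rfl, ha⟩, -, hb⟩⟩
    · subst ha hb; exact h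
    · subst ha hb; exact h.symm
  · intro h
    exact ⟨h.ne, Or.inl ⟨i, a, b, h, ⟨rfl, HEq.rfl⟩, rfl, HEq.rfl⟩⟩

theorem compl_sigmaUnion_adj_mk {i : ι} {a b : W i} :
    (sigmaUnion G)ᶜ.Adj ⟨i, a⟩ ⟨i, b⟩ ↔ (G i)ᶜ.Adj a b := by
  simp only [compl_adj, sigmaUnion_adj_mk, ne_eq, Sigma.mk.inj_iff, heq_eq_eq, true_and]

theorem fst_eq_of_sigmaUnion_adj {x y : Σ i, W i} (h : (sigmaUnion G).Adj x y) : x.1 = y.1 := by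
  obtain ⟨-, ⟨j, a, b, -, rfl, rfl⟩ | ⟨j, a, b, -, rfl, rfl⟩⟩ := (fromRel_adj _ _ _).1 h
    <;> rfl

variable [Fintype ι] [DecidableEq ι] [∀ i, Fintype (W i)]

theorem indepNum_sigmaUnion : indepNum (sigmaUnion G) = ∑ i, indepNum (G i) := by
  apply le_antisymm
  · obtain ⟨S, hS⟩ := exists_isNIndepSet_indepNum (sigmaUnion G)
    rw [← hS.card_eq, ← sigma_preimage_mk_of_subset S (subset_univ _), card_sigma]
    refine sum_le_sum fun i _ => card_le_indepNum fun a ha b hb hne hadj => ?_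
    exact hS.isIndepSet (mem_preimage.1 ha) (mem_preimage.1 hb) (by simpa using hne)
      (sigmaUnion_adj_mk.2 hadj)
  · choose s hs using fun i => exists_isNIndepSet_indepNum (G i)
    simp_rw [← fun i => (hs i).card_eq, ← card_sigma]
    refine card_le_indepNum fun x hx y hy hne hadj => ?_
    obtain ⟨i, a⟩ := x
    obtain ⟨j, b⟩ := y
    obtain rfl : i = j := fst_eq_of_sigmaUnion_adj hadj
    rw [mem_coe, mem_sigma] at hx hy
    exact (hs i).isIndepSet hx.2 hy.2 (by simpa using hne) (sigmaUnion_adj_mk.1 hadj)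

end SigmaUnion

section Pattern

variable {V P ι : Type*}

-- Every vertex of `(H + E_P)^ι` is `patternJoin t s` for exactly one pattern `t`, and vertices
-- with different patterns are never adjacent: `(H + E_P)^ι` is the disjoint union of the
-- `patternPiece`s below.
def patternJoin (t : ι → Option P) (s : {i // t i = none} → V) : ι → V ⊕ P :=
  fun i => match h : t i with
    | none => .inl (s ⟨i, h⟩)
    | some c => .inr c

variable {t : ι → Option P} {s : {i // t i = none} → V} {i : ι}

theorem patternJoin_of_none (h : t i = none) : patternJoin t s i = .inl (s ⟨i, h⟩) := by
  unfold patternJoin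
  split <;> simp_all

theorem patternJoin_of_some {c : P} (h : t i = some c) : patternJoin t s i = .inr c := by
  unfold patternJoin
  split <;> simp_all

variable (P ι) (H : SimpleGraph V)

abbrev patternPiece (t : ι → Option P) : SimpleGraph ({i // t i = none} → V) :=
  piStrongProd fun _ => H

def patternJoinHom :
    sigmaUnion (patternPiece P ι H) →g
      piStrongProd fun _ : ι => H ⊕g (⊥ : SimpleGraph P) where
  toFun x := patternJoin x.1 x.2
  map_rel' {x y} h := by
    obtain ⟨t, s⟩ := x
    obtain ⟨t', s'⟩ := y
    obtain rfl : t = t' := fst_eq_of_sigmaUnion_adj h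
    rw [sigmaUnion_adj_mk] at h
    obtain ⟨hne, hadj⟩ := piStrongProd_adj.1 h
    refine piStrongProd_adj.2 ⟨fun he => hne (funext fun j => ?_), fun i => ?_⟩
    · simpa [patternJoin_of_none j.2] using congrFun he j
    · cases ht : t i with
      | none => simpa [patternJoin_of_none ht] using hadj ⟨i, ht⟩
      | some c => simp [patternJoin_of_some ht]

theorem patternJoinHom_surjective : Function.Surjective (patternJoinHom P ι H) := by
  intro x
  refine ⟨⟨fun i => (x i).getRight?,
    fun i => (x i).getLeft (Sum.getRight?_eq_none_iff.1 i.2)⟩, funext fun i => ?_⟩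
  show patternJoin _ _ i = x i
  rcases hx : x i with a | c
  · rw [patternJoin_of_none (by simp [hx])]
    simp [hx]
  · rw [patternJoin_of_some (c := c) (by simp [hx])]

def patternJoinHomCompl :
    (sigmaUnion (patternPiece P ι H))ᶜ →g
      (piStrongProd fun _ : ι => H ⊕g (⊥ : SimpleGraph P))ᶜ where
  toFun x := patternJoin x.1 x.2
  map_rel' {x y} h := by
    obtain ⟨t, s⟩ := x
    obtain ⟨t', s'⟩ := y
    refine compl_piStrongProd_adj.2 ?_
    by_cases htt : t = t'
    · subst htt
      rw [compl_sigmaUnion_adj_mk] at h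
      obtain ⟨j, hj⟩ := compl_piStrongProd_adj.1 h
      refine ⟨j, ?_⟩
      simpa [patternJoin_of_none j.2, compl_adj] using hj
    · obtain ⟨i, hi⟩ := Function.ne_iff.1 htt
      refine ⟨i, ?_⟩
      cases ht : t i <;> cases ht' : t' i <;>
        simp_all [patternJoin_of_none, patternJoin_of_some, compl_adj]

end Pattern

def patternSum (a : ℕ → ℕ) (P : Type*) [Fintype P] [DecidableEq P] (n : ℕ) : ℕ :=
  ∑ t : Fin n → Option P, a #{i | t i = none}

theorem indepNum_strongPow_sum_bot {V P : Type*} [Fintype V] [Fintype P] [DecidableEq P]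
    (H : SimpleGraph V) (n : ℕ) :
    indepNum (strongPow (H ⊕g (⊥ : SimpleGraph P)) n) =
      patternSum (fun j => indepNum (strongPow H j)) P n := by
  have hsplit : indepNum (strongPow (H ⊕g (⊥ : SimpleGraph P)) n) =
      indepNum (sigmaUnion (patternPiece P (Fin n) H)) :=
    le_antisymm (indepNum_le_of_surjective _ (patternJoinHom_surjective P (Fin n) H))
      (indepNum_le_of_hom_compl (patternJoinHomCompl P (Fin n) H))
  rw [hsplit, indepNum_sigmaUnion, patternSum]
  refine sum_congr rfl fun t _ => ?_
  rw [indepNum_piStrongProd_eq_strongPow, Fintype.card_subtype]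

theorem prod_le_apply_sum {ι : Type*} (a : ℕ → ℕ) (h0 : 1 ≤ a 0)
    (ha : ∀ i j, a i * a j ≤ a (i + j)) (s : Finset ι) (f : ι → ℕ) :
    ∏ i ∈ s, a (f i) ≤ a (∑ i ∈ s, f i) := by
  classical
  induction s using Finset.cons_induction with
  | empty => simpa using h0
  | cons i s hi ih =>
    rw [prod_cons, sum_cons]
    exact (Nat.mul_le_mul_left _ ih).trans (ha _ _)

-- Expand the `M`-th power as a sum over `M`-tuples of patterns and compare termwise; the tuple
-- of patterns with a single `none` each contributes `a 1 ^ M < a M`.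
theorem patternSum_pow_lt {P : Type*} [Fintype P] [DecidableEq P] [Nonempty P] (a : ℕ → ℕ)
    (h0 : 1 ≤ a 0) (ha : ∀ i j, a i * a j ≤ a (i + j)) {k M : ℕ} (hk : 0 < k)
    (hM : a 1 ^ M < a M) : patternSum a P k ^ M < patternSum a P (M * k) := by
  let e : (Fin M → Fin k → Option P) ≃ (Fin (M * k) → Option P) :=
    (Equiv.curry _ _ _).symm.trans (finProdFinEquiv.arrowCongr (Equiv.refl _))
  have hcount (T : Fin M → Fin k → Option P) :
      #{m | e T m = none} = ∑ j, #{i | T j i = none} := by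
    change #{m | Function.uncurry T (finProdFinEquiv.symm m) = none} = _
    simp only [card_filter]
    rw [finProdFinEquiv.symm.sum_comp (fun p => if Function.uncurry T p = none then 1 else 0),
      Fintype.sum_prod_type]
    rfl
  let t₁ : Fin k → Option P := fun i =>
    if i = ⟨0, hk⟩ then none else some (Classical.arbitrary P)
  have ht₁ : #{i | t₁ i = none} = 1 := by simp [t₁, filter_eq']
  rw [patternSum, patternSum, Fintype.sum_pow, ← e.sum_comp]
  refine sum_lt_sum (fun T _ => ?_) ⟨fun _ => t₁, mem_univ _, ?_⟩
  · rw [hcount]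
    exact prod_le_apply_sum a h0 ha _ _
  · simpa [hcount, ht₁] using hM

section Capacity

variable {U : Type*} [Fintype U]

theorem shannonCapacity_bddAbove (F : SimpleGraph U) :
    BddAbove (Set.range fun k : ℕ =>
      (indepNum (strongPow F (k + 1)) : ℝ) ^ ((1 : ℝ) / (k + 1))) := by
  refine ⟨Fintype.card U, Set.forall_mem_range.2 fun k => ?_⟩
  have hα :
      (indepNum (strongPow F (k + 1)) : ℝ) ≤ (Fintype.card U : ℝ) ^ ((k : ℝ) + 1) := by
    rw [← Nat.cast_add_one, Real.rpow_natCast]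
    exact_mod_cast (indepNum_le_card _).trans_eq (by simp)
  rwa [one_div, Real.rpow_inv_le_iff_of_pos (by positivity) (by positivity) (by positivity)]

theorem indepNum_strongPow_le_shannonCapacity_pow (F : SimpleGraph U) {N : ℕ} (hN : N ≠ 0) :
    (indepNum (strongPow F N) : ℝ) ≤ shannonCapacity F ^ N := by
  obtain ⟨j, rfl⟩ := Nat.exists_eq_succ_of_ne_zero hN
  have h := le_ciSup (shannonCapacity_bddAbove F) j
  rwa [one_div, Real.rpow_inv_le_iff_of_pos (by positivity) (le_trans (by positivity) h)
    (by positivity), ← Nat.cast_add_one, Real.rpow_natCast] at h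

theorem exists_pow_lt_indepNum_strongPow {H : SimpleGraph U}
    (hH : (indepNum H : ℝ) < shannonCapacity H) :
    ∃ M, 0 < M ∧ indepNum H ^ M < indepNum (strongPow H M) := by
  obtain ⟨j, hj⟩ := exists_lt_of_lt_ciSup hH
  refine ⟨j + 1, j.succ_pos, ?_⟩
  rw [one_div, Real.lt_rpow_inv_iff_of_pos (by positivity) (by positivity) (by positivity),
    ← Nat.cast_add_one, Real.rpow_natCast] at hj
  exact_mod_cast hj

theorem indepNum_strongPow_lt_shannonCapacity_pow (F : SimpleGraph U) {k M : ℕ} (hk : 0 < k)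
    (hM : 0 < M) (h : indepNum (strongPow F k) ^ M < indepNum (strongPow F (M * k))) :
    (indepNum (strongPow F k) : ℝ) < shannonCapacity F ^ k := by
  have hΘ : 0 ≤ shannonCapacity F := Real.iSup_nonneg fun _ => by positivity
  refine lt_of_pow_lt_pow_left₀ M (by positivity) ?_
  calc (indepNum (strongPow F k) : ℝ) ^ M < indepNum (strongPow F (M * k)) := by exact_mod_cast h
    _ ≤ shannonCapacity F ^ (M * k) :=
        indepNum_strongPow_le_shannonCapacity_pow F (Nat.mul_ne_zero hM.ne' hk.ne')
    _ = (shannonCapacity F ^ k) ^ M := by rw [← pow_mul, mul_comm]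

end Capacity

section AttachPath

variable {V : Type*} (H : SimpleGraph V) (v : V) {l : ℕ}

@[simp] theorem attachPath_adj_inl_inl {a b : V} :
    (attachPath H v l).Adj (.inl a) (.inl b) ↔ H.Adj a b := by
  simpa [attachPath, adj_comm] using and_iff_right_of_imp Adj.ne

@[simp] theorem attachPath_adj_inr_inr {i j : Fin l} :
    (attachPath H v l).Adj (.inr i) (.inr j) ↔ (pathGraph l).Adj i j := by
  simpa [attachPath, adj_comm] using and_iff_right_of_imp Adj.ne

@[simp] theorem attachPath_adj_inl_inr {a : V} {j : Fin l} :
    (attachPath H v l).Adj (.inl a) (.inr j) ↔ a = v ∧ (j : ℕ) = 0 := by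
  simp [attachPath, and_comm]

@[simp] theorem attachPath_adj_inr_inl {a : V} {j : Fin l} :
    (attachPath H v l).Adj (.inr j) (.inl a) ↔ a = v ∧ (j : ℕ) = 0 := by
  rw [adj_comm, attachPath_adj_inl_inr]

theorem sum_pathGraph_le_attachPath : H ⊕g pathGraph l ≤ attachPath H v l := by
  rintro (a | i) (b | j) h <;> simp_all

def sumPathGraphComplHom (p : ℕ) :
    (H ⊕g pathGraph (p + p))ᶜ →g (H ⊕g (⊥ : SimpleGraph (Fin p)))ᶜ where
  toFun := Sum.map id fun i => ⟨i / 2, by omega⟩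
  map_rel' {x y} h := by
    rcases x with a | i <;> rcases y with b | j <;>
      simp_all [compl_adj, pathGraph_adj, Fin.ext_iff]
    omega

def sumBotComplHom (p : ℕ) :
    (H ⊕g (⊥ : SimpleGraph (Fin p)))ᶜ →g (attachPath H v (p + p))ᶜ where
  toFun := Sum.map id fun c => ⟨2 * c + 1, by omega⟩
  map_rel' {x y} h := by
    rcases x with a | i <;> rcases y with b | j <;>
      simp_all [compl_adj, pathGraph_adj, Fin.ext_iff]
    omega

end AttachPath

theorem connected_unattainable {V : Type*} [Fintype V] (H : SimpleGraph V) (v : V)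
    (l : ℕ) (hl2 : 2 ≤ l) (hleven : Even l)
    (hH : (indepNum H : ℝ) < shannonCapacity H) :
    shannonCapacity (attachPath H v l) = shannonCapacity (H ⊕g SimpleGraph.pathGraph l) ∧
    (∀ k : ℕ, indepNum (strongPow (attachPath H v l) k)
        = indepNum (strongPow (H ⊕g SimpleGraph.pathGraph l) k)) ∧
    (∀ k : ℕ, 1 ≤ k →
      (indepNum (strongPow (attachPath H v l) k) : ℝ)
        < shannonCapacity (attachPath H v l) ^ k) := by
  obtain ⟨p, rfl⟩ := hleven
  have : Nonempty (Fin p) := ⟨⟨0, by omega⟩⟩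
  have hattach_path (n : ℕ) := indepNum_strongPow_le_of_hom_compl
    (Hom.ofLE (compl_le_compl (sum_pathGraph_le_attachPath H v (l := p + p)))) n
  have hpath_bot (n : ℕ) := indepNum_strongPow_le_of_hom_compl (sumPathGraphComplHom H p) n
  have hbot_attach (n : ℕ) := indepNum_strongPow_le_of_hom_compl (sumBotComplHom H v p) n
  have hpath (n : ℕ) := le_antisymm (hattach_path n) ((hpath_bot n).trans (hbot_attach n))
  have hbot (n : ℕ) := le_antisymm ((hattach_path n).trans (hpath_bot n)) (hbot_attach n)
  refine ⟨by simp only [shannonCapacity, hpath], hpath, fun k hk => ?_⟩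
  obtain ⟨M, hM, hseed⟩ := exists_pow_lt_indepNum_strongPow hH
  refine indepNum_strongPow_lt_shannonCapacity_pow _ hk hM ?_
  rw [hbot, hbot, indepNum_strongPow_sum_bot, indepNum_strongPow_sum_bot]
  exact patternSum_pow_lt _ (one_le_indepNum _) (indepNum_strongPow_mul_le_add H) hk
    (by rwa [indepNum_strongPow_one])

end Paper
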